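/- If t_{α₁} t_{α₂} ⋯ t_{α_ℓ} is a shortest factorization of a Coxeter element of W into reflections (where α_i ∈ Φ⁺), then {α₁, α₂, ..., α_ℓ} is a linear basis of V. -/

import Mathlib

open scoped RealInnerProductSpace
open Module

noncomputable section

variable {V : Type*} [NormedAddCommGroup V] [InnerProductSpace ℝ V]

/-- `g` acts as the orthogonal reflection in the hyperplane orthogonal to `α`. -/
def reflFormula (α : V) (g : V ≃ₗᵢ[ℝ] V) : Prop :=
  ∀ v, g v = v - (2 * ⟪α, v⟫ / ⟪α, α⟫) • α

/-- `g` is an orthogonal reflection. -/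
def IsReflection (g : V ≃ₗᵢ[ℝ] V) : Prop :=
  ∃ α : V, α ≠ 0 ∧ reflFormula α g

/-- A finite real reflection group: a finite subgroup of the orthogonal group
generated by its reflections. -/
def IsReflectionGroup (W : Subgroup (V ≃ₗᵢ[ℝ] V)) : Prop :=
  Finite W ∧ Subgroup.closure {g | g ∈ W ∧ IsReflection g} = W

/-- Reflection length: the least `k` such that `w` is a product of `k` reflections. -/
def refLen (W : Subgroup (V ≃ₗᵢ[ℝ] V)) (w : W) : ℕ :=
  sInf {k | ∃ l : List W, l.length = k ∧ (∀ t ∈ l, IsReflection (t : W).1) ∧ l.prod = w}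

/-- The absolute order on `W`. -/
def absLe (W : Subgroup (V ≃ₗᵢ[ℝ] V)) (u v : W) : Prop :=
  refLen W u + refLen W (u⁻¹ * v) = refLen W v

/-- Covering relation of the absolute order. -/
def covers (W : Subgroup (V ≃ₗᵢ[ℝ] V)) (u v : W) : Prop :=
  absLe W u v ∧ u ≠ v ∧ ∀ z, absLe W u z → absLe W z v → z = u ∨ z = v

/-- The fixed subspace of an isometry. -/
def fixedSpace (g : V ≃ₗᵢ[ℝ] V) : Submodule ℝ V where
  carrier := {v | g v = v}
  add_mem' := by
    intro a b ha hb
    simp only [Set.mem_setOf_eq, map_add] at *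
    rw [ha, hb]
  zero_mem' := by simp
  smul_mem' := by
    intro c a ha
    simp only [Set.mem_setOf_eq, map_smul] at *
    rw [ha]

/-- A root system for the reflection group `W`. -/
def IsRootSystemFor (W : Subgroup (V ≃ₗᵢ[ℝ] V)) (Φ : Set V) : Prop :=
  Φ.Finite ∧ (∀ α ∈ Φ, α ≠ 0) ∧ (∀ α ∈ Φ, -α ∈ Φ) ∧
  (∀ α ∈ Φ, ∀ c : ℝ, c • α ∈ Φ → c = 1 ∨ c = -1) ∧
  (∀ α ∈ Φ, ∃ t ∈ W, reflFormula α t) ∧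
  (∀ t ∈ W, IsReflection t → ∃ α ∈ Φ, reflFormula α t) ∧
  (∀ g ∈ W, ∀ α ∈ Φ, g α ∈ Φ)

/-- A simple system for `Φ`: roots `σ 1, …, σ ℓ` which are linearly independent and
such that every root is a nonnegative or nonpositive combination of them. -/
def IsSimpleSystem (Φ : Set V) {ℓ : ℕ} (σ : Fin ℓ → V) : Prop :=
  (∀ i, σ i ∈ Φ) ∧ LinearIndependent ℝ σ ∧
  ∀ α ∈ Φ, (∃ c : Fin ℓ → ℝ, (∀ i, 0 ≤ c i) ∧ α = ∑ i, c i • σ i) ∨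
           (∃ c : Fin ℓ → ℝ, (∀ i, 0 ≤ c i) ∧ -α = ∑ i, c i • σ i)

/-- `γ` is a Coxeter element of `W`: a product, in some order, of the reflections in
the `ℓ` simple roots of some simple system of the root system `Φ`. -/
def IsCoxeterElement (W : Subgroup (V ≃ₗᵢ[ℝ] V)) (Φ : Set V) (ℓ : ℕ) (γ : W) : Prop :=
  ∃ σ : Fin ℓ → V, IsSimpleSystem Φ σ ∧
    ∃ t : Fin ℓ → W, (∀ i, reflFormula (σ i) (t i).1) ∧
      ∃ l : List (Fin ℓ), l.Nodup ∧ (∀ i, i ∈ l) ∧ (l.map t).prod = γ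

/-- `l` is a maximal (saturated) chain from `u` to `v` in the absolute order. -/
def IsMaximalChain (W : Subgroup (V ≃ₗᵢ[ℝ] V)) (u v : W) (l : List W) : Prop :=
  l.head? = some u ∧ l.getLast? = some v ∧ l.Chain' (covers W)

/-- The label of a chain under the natural edge labeling `λ (x, y) = x⁻¹ * y`. -/
def chainLabels (W : Subgroup (V ≃ₗᵢ[ℝ] V)) (l : List W) : List W :=
  l.zipWith (fun x y => x⁻¹ * y) l.tail

end

/-! If reflections in linearly independent roots `β₁, …, β_k` have product fixing `v`, then
`v - t₁ (t₂ ⋯ t_k v)` is a multiple of `β₁` and also lies in the span of `β₂, …, β_k`, so the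
multiple vanishes and induction shows `v ⊥ βᵢ` for all `i`. Hence a Coxeter element fixes only
`0`. Any product of reflections fixes the orthogonal complement of its roots, so the `αᵢ` span
`V`, and `ℓ = dim V` spanning vectors form a basis. -/

open Submodule

section Reflections

variable {V : Type*} [NormedAddCommGroup V] [InnerProductSpace ℝ V]

namespace reflFormula

variable {α : V} {g : V ≃ₗᵢ[ℝ] V}

lemma apply_of_inner_eq_zero (h : reflFormula α g) {v : V} (hv : ⟪α, v⟫ = 0) : g v = v := by
  simp [h v, hv]

lemma sub_apply_eq_smul (h : reflFormula α g) (v : V) :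
    v - g v = (2 * ⟪α, v⟫ / ⟪α, α⟫) • α := by
  rw [h v, sub_sub_cancel]

end reflFormula

lemma list_prod_apply_eq_self {L : List (V ≃ₗᵢ[ℝ] V)} {v : V} (h : ∀ g ∈ L, g v = v) :
    L.prod v = v := by
  induction L with
  | nil => rfl
  | cons g L ih =>
    rw [List.prod_cons, LinearIsometryEquiv.coe_mul, Function.comp_apply,
      ih fun g' hg' => h g' (List.mem_cons_of_mem g hg'), h g List.mem_cons_self]

section RootFamily

variable {ι : Type*} {β : ι → V} {g : ι → V ≃ₗᵢ[ℝ] V}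

lemma sub_list_prod_apply_mem_span (hg : ∀ i, reflFormula (β i) (g i)) (l : List ι) (v : V) :
    v - (l.map g).prod v ∈ span ℝ (β '' {i | i ∈ l}) := by
  induction l with
  | nil => simp
  | cons i l ih =>
    set P := (l.map g).prod
    have hsplit : v - (g i * P) v = (v - P v) + (P v - g i (P v)) := by
      simp only [LinearIsometryEquiv.coe_mul, Function.comp_apply]
      abel
    rw [List.map_cons, List.prod_cons, hsplit, (hg i).sub_apply_eq_smul]
    exact add_mem (span_mono (Set.image_mono fun j hj => List.mem_cons_of_mem i hj) ih)
      (smul_mem _ _ (subset_span ⟨i, List.mem_cons_self, rfl⟩))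

lemma inner_eq_zero_of_list_prod_apply_eq_self (hg : ∀ i, reflFormula (β i) (g i))
    (hβ : LinearIndependent ℝ β) {l : List ι} (hl : l.Nodup) {v : V}
    (hv : (l.map g).prod v = v) : ∀ i ∈ l, ⟪β i, v⟫ = 0 := by
  induction l with
  | nil => simp
  | cons i l ih =>
    obtain ⟨hi, hl⟩ := List.nodup_cons.mp hl
    set P := (l.map g).prod
    set c := 2 * ⟪β i, P v⟫ / ⟪β i, β i⟫
    rw [List.map_cons, List.prod_cons, LinearIsometryEquiv.coe_mul, Function.comp_apply] at hv
    have hc_mem : c • β i ∈ span ℝ (β '' {j | j ∈ l}) := by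
      rw [← (hg i).sub_apply_eq_smul, hv, ← neg_sub]
      exact neg_mem (sub_list_prod_apply_mem_span hg l v)
    have hc : c = 0 := by
      by_contra hc
      refine hβ.notMem_span_image (s := {j | j ∈ l}) hi ?_
      simpa [smul_smul, inv_mul_cancel₀ hc] using smul_mem _ c⁻¹ hc_mem
    have hPv : ⟪β i, P v⟫ = 0 := by
      simpa [c, hβ.ne_zero i] using hc
    have hfix : P v = v := by rwa [(hg i).apply_of_inner_eq_zero hPv] at hv
    rw [hfix] at hPv
    exact List.forall_mem_cons.mpr ⟨hPv, ih hl hfix⟩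

end RootFamily

lemma IsCoxeterElement.fixedSpace_eq_bot [FiniteDimensional ℝ V] {W : Subgroup (V ≃ₗᵢ[ℝ] V)}
    {Φ : Set V} {ℓ : ℕ} {γ : W} (hγ : IsCoxeterElement W Φ ℓ γ) (hℓ : finrank ℝ V = ℓ) :
    fixedSpace (γ : V ≃ₗᵢ[ℝ] V) = ⊥ := by
  obtain ⟨σ, ⟨-, hσ, -⟩, t, ht, l, hl, hall, rfl⟩ := hγ
  have hspan : span ℝ (Set.range σ) = ⊤ :=
    hσ.span_eq_top_of_card_eq_finrank' (by simp [hℓ])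
  refine eq_bot_iff.mpr fun v hv => ?_
  rw [SubmonoidClass.coe_list_prod, List.map_map] at hv
  have horth := inner_eq_zero_of_list_prod_apply_eq_self (g := fun i => (t i : V ≃ₗᵢ[ℝ] V))
    ht hσ hl hv
  have hle : span ℝ (Set.range σ) ≤ (ℝ ∙ v)ᗮ := span_le.mpr <| by
    rintro _ ⟨j, rfl⟩
    exact mem_orthogonal_singleton_iff_inner_left.mpr (horth j (hall j))
  have hvv : ⟪v, v⟫ = 0 := mem_orthogonal_singleton_iff_inner_left.mp (hle (hspan ▸ mem_top))
  exact inner_self_eq_zero.mp hvv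

lemma span_range_eq_top_of_fixedSpace_eq_bot [FiniteDimensional ℝ V] {n : ℕ} {α : Fin n → V}
    {g : Fin n → V ≃ₗᵢ[ℝ] V}
    (hg : ∀ i, reflFormula (α i) (g i)) (h : fixedSpace (List.ofFn g).prod = ⊥) :
    span ℝ (Set.range α) = ⊤ := by
  rw [← orthogonal_eq_bot_iff, eq_bot_iff, ← h]
  intro v hv
  refine list_prod_apply_eq_self fun _ hmem => ?_
  obtain ⟨i, rfl⟩ := List.mem_ofFn.mp hmem
  exact (hg i).apply_of_inner_eq_zero ((mem_orthogonal _ v).mp hv _ (subset_span ⟨i, rfl⟩))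

end Reflections

theorem statement11_general {V : Type*} [NormedAddCommGroup V] [InnerProductSpace ℝ V]
    [FiniteDimensional ℝ V]
    (W : Subgroup (V ≃ₗᵢ[ℝ] V))
    (Φ : Set V)
    (ℓ : ℕ) (hℓ : Module.finrank ℝ V = ℓ)
    (γ : W) (hγ : IsCoxeterElement W Φ ℓ γ)
    (α : Fin ℓ → V)
    (t : Fin ℓ → W) (ht : ∀ i, reflFormula (α i) (t i).1)
    (hprod : (List.ofFn t).prod = γ) :
    LinearIndependent ℝ α ∧ Submodule.span ℝ (Set.range α) = ⊤ := by
  have hfix : fixedSpace (List.ofFn fun i => (t i : V ≃ₗᵢ[ℝ] V)).prod = ⊥ := by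
    have hcoe : (List.ofFn fun i => (t i : V ≃ₗᵢ[ℝ] V)).prod = γ := by
      rw [← hprod, SubmonoidClass.coe_list_prod, List.map_ofFn]
      rfl
    rw [hcoe]
    exact hγ.fixedSpace_eq_bot hℓ
  have hspan := span_range_eq_top_of_fixedSpace_eq_bot ht hfix
  exact ⟨linearIndependent_of_top_le_span_of_card_eq_finrank hspan.ge (by simp [hℓ]), hspan⟩

/-- If `t_{α₁} ⋯ t_{α_ℓ}` is a shortest factorization of a Coxeter element into
reflections (with `α i ∈ Φ⁺`), then `α₁, …, α_ℓ` is a linear basis of `V`. -/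
theorem statement11 {V : Type*} [NormedAddCommGroup V] [InnerProductSpace ℝ V]
    [FiniteDimensional ℝ V]
    (W : Subgroup (V ≃ₗᵢ[ℝ] V)) (hW : IsReflectionGroup W)
    (Φ Φpos : Set V) (hΦ : IsRootSystemFor W Φ)
    (hpos : ∃ f : V →ₗ[ℝ] ℝ, (∀ α ∈ Φ, f α ≠ 0) ∧ Φpos = {α ∈ Φ | 0 < f α})
    (ℓ : ℕ) (hℓ : Module.finrank ℝ V = ℓ)
    (γ : W) (hγ : IsCoxeterElement W Φ ℓ γ)
    (α : Fin ℓ → V) (hα : ∀ i, α i ∈ Φpos)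
    (t : Fin ℓ → W) (ht : ∀ i, reflFormula (α i) (t i).1)
    (hprod : (List.ofFn t).prod = γ) (hshort : refLen W γ = ℓ) :
    LinearIndependent ℝ α ∧ Submodule.span ℝ (Set.range α) = ⊤ :=
  statement11_general W Φ ℓ hℓ γ hγ α t ht hprod
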